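/- If a set H² admits a simply transitive action of an abelian group Z, and similarly each H²ᵢ admits a simply transitive Zᵢ-action compatibly with restriction maps, then patching (the equalizer property) for the Z-groups together with nonemptiness of the global H² implies patching for the H²-sets. Precisely: let Z, Zᵢ (i in a finite index set I_v), Z_k (k in I_e) be abelian groups with maps Z → Zᵢ and, for each triple (i,j,k) in S_I, maps Zᵢ → Z_k and Z_j → Z_k, such that the sequence Z → ∏ᵢ Zᵢ ⇉ ∏_k Z_k is an equalizer. Let H, Hᵢ, H_k be sets with simply transitive actions of Z, Zᵢ, Z_k respectively and equivariant maps H → Hᵢ, Hᵢ → H_k, H_j → H_k (equivariant with respect to the corresponding group maps). If H is nonempty, then H → ∏ᵢ Hᵢ ⇉ ∏_k H_k is an equalizer diagram of sets: every family (βᵢ) with matching images in each H_k comes from a unique β in H. -/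

import Mathlib

/-!
Fix a base point `x₀ ∈ H`. A family `β` with matching restrictions is `w • ρ(x₀)` for some
`w ∈ ∏ᵢ Zᵢ`; equivariance of the overlap maps and simple transitivity on the `H_k` force `w` to
have matching restrictions too, so `w` comes from some `z ∈ Z` and `z • x₀` restricts to `β`.
Conversely, two classes with equal restrictions differ by some `z ∈ Z` acting trivially on every
`Hᵢ`, hence `φᵢ z = 1` for all `i` and `z = 1`.
-/

def IsSimplyTransitive {G X : Type*} (act : G → X → X) : Prop :=
  ∀ x y : X, ∃! g, act g x = y

namespace IsSimplyTransitive

variable {G X : Type*} {act : G → X → X}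

theorem eq_of_act_eq (h : IsSimplyTransitive act) {g g' : G} {x : X}
    (hg : act g x = act g' x) : g = g' :=
  (h x (act g' x)).unique hg rfl

theorem pi {ι : Type*} {G X : ι → Type*} {act : ∀ i, G i → X i → X i}
    (h : ∀ i, IsSimplyTransitive (act i)) :
    IsSimplyTransitive fun (g : ∀ i, G i) (x : ∀ i, X i) i => act i (g i) (x i) := by
  intro x y
  choose g hg using fun i => (h i (x i) (y i)).exists
  exact ⟨g, funext hg, fun g' hg' =>
    funext fun i => (h i (x i) (y i)).unique (congrFun hg' i) (hg i)⟩

end IsSimplyTransitive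

section Equalizer

variable {Z W V H K L : Type*} {actH : Z → H → H} {actK : W → K → K} {actL : V → L → L}
  {φ : Z → W} {ρ : H → K}

theorem injective_of_equivariant [One Z] [One W] (hH : ∀ x y, ∃ z, actH z x = y)
    (hH1 : ∀ x, actH 1 x = x) (hK : IsSimplyTransitive actK) (hK1 : ∀ y, actK 1 y = y)
    (hφ : Function.Injective φ) (hφ1 : φ 1 = 1)
    (hρ : ∀ z x, ρ (actH z x) = actK (φ z) (ρ x)) :
    Function.Injective ρ := by
  intro x y hxy
  obtain ⟨z, rfl⟩ := hH x y
  have : φ z = φ 1 := hK.eq_of_act_eq (by rw [← hρ, ← hxy, hφ1, hK1])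
  rw [hφ this, hH1]

theorem exists_apply_eq_of_equivariant {r₁ r₂ : W → V} {s₁ s₂ : K → L} (x₀ : H)
    (hK : ∀ y y', ∃ w, actK w y = y') (hL : IsSimplyTransitive actL)
    (hφ : ∀ w, r₁ w = r₂ w → ∃ z, φ z = w) (hρ : ∀ z x, ρ (actH z x) = actK (φ z) (ρ x))
    (hs₁ : ∀ w y, s₁ (actK w y) = actL (r₁ w) (s₁ y))
    (hs₂ : ∀ w y, s₂ (actK w y) = actL (r₂ w) (s₂ y))
    (hcomm : s₁ (ρ x₀) = s₂ (ρ x₀)) {β : K} (hβ : s₁ β = s₂ β) : ∃ x, ρ x = β := by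
  obtain ⟨w, hw⟩ := hK (ρ x₀) β
  have hr : r₁ w = r₂ w :=
    hL.eq_of_act_eq (x := s₁ (ρ x₀)) (by rw [← hs₁, hw, hβ, hcomm, ← hs₂, hw])
  obtain ⟨z, rfl⟩ := hφ w hr
  exact ⟨actH z x₀, by rw [hρ, hw]⟩

end Equalizer

theorem patching_H2_of_patching_center_general {Iv Ie : Type}
    (S : Set (Iv × Iv × Ie))
    (Z : Type) [CommGroup Z] (Zv : Iv → Type) [∀ i, CommGroup (Zv i)]
    (Ze : Ie → Type) [∀ k, CommGroup (Ze k)]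
    (φ : ∀ i, Z →* Zv i)
    (r1 : ∀ p : Iv × Iv × Ie, p ∈ S → (Zv p.1 →* Ze p.2.2))
    (r2 : ∀ p : Iv × Iv × Ie, p ∈ S → (Zv p.2.1 →* Ze p.2.2))
    -- the groups form an equalizer diagram `Z → ∏ᵢ Zᵢ ⇉ ∏ₖ Zₖ`:
    (hZinj : Function.Injective fun z : Z => fun i => φ i z)
    (hZeq : ∀ f : ∀ i, Zv i,
      (∀ p (hp : p ∈ S), r1 p hp (f p.1) = r2 p hp (f p.2.1)) ↔ ∃ z : Z, ∀ i, φ i z = f i)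
    -- the `H²`-sets with their simply transitive actions:
    (H : Type) (Hv : Iv → Type) (He : Ie → Type)
    (act : Z → H → H) (actv : ∀ i, Zv i → Hv i → Hv i) (acte : ∀ k, Ze k → He k → He k)
    (hact1 : ∀ x, act 1 x = x)
    (hactv1 : ∀ i x, actv i 1 x = x)
    (hsimply : ∀ x y : H, ∃! z : Z, act z x = y)
    (hsimplyv : ∀ i (x y : Hv i), ∃! z : Zv i, actv i z x = y)
    (hsimplye : ∀ k (x y : He k), ∃! z : Ze k, acte k z x = y)
    -- the equivariant restriction maps:
    (ρ : ∀ i, H → Hv i)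
    (s1 : ∀ p : Iv × Iv × Ie, p ∈ S → (Hv p.1 → He p.2.2))
    (s2 : ∀ p : Iv × Iv × Ie, p ∈ S → (Hv p.2.1 → He p.2.2))
    (hρequiv : ∀ i z x, ρ i (act z x) = actv i (φ i z) (ρ i x))
    (hs1equiv : ∀ p (hp : p ∈ S) z x, s1 p hp (actv p.1 z x) = acte p.2.2 (r1 p hp z) (s1 p hp x))
    (hs2equiv : ∀ p (hp : p ∈ S) z x,
      s2 p hp (actv p.2.1 z x) = acte p.2.2 (r2 p hp z) (s2 p hp x))
    (hcomm : ∀ (x : H) p (hp : p ∈ S), s1 p hp (ρ p.1 x) = s2 p hp (ρ p.2.1 x))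
    -- nonemptiness of the global `H²`:
    (hne : Nonempty H) :
    -- conclusion: `H → ∏ᵢ Hᵢ ⇉ ∏ₖ Hₖ` is an equalizer diagram of sets
    Function.Injective (fun x : H => fun i => ρ i x) ∧
      ∀ β : ∀ i, Hv i, (∀ p (hp : p ∈ S), s1 p hp (β p.1) = s2 p hp (β p.2.1)) →
        ∃! x : H, ∀ i, ρ i x = β i := by
  obtain ⟨x₀⟩ := hne
  -- `∏ᵢ Hᵢ` and `∏_{q ∈ S} H_{q.2.2}` are treated as single sets with the componentwise actions.
  have hK := IsSimplyTransitive.pi hsimplyv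
  have hinj : Function.Injective fun x i => ρ i x :=
    injective_of_equivariant (fun x y => (hsimply x y).exists) hact1 hK
      (fun y => funext fun i => hactv1 i (y i)) hZinj (funext fun i => map_one (φ i))
      (fun z x => funext fun i => hρequiv i z x)
  refine ⟨hinj, fun β hβ => ?_⟩
  obtain ⟨x, hx⟩ := exists_apply_eq_of_equivariant (ρ := fun x i => ρ i x)
    (r₁ := fun (w : ∀ i, Zv i) (q : S) => r1 q.1 q.2 (w q.1.1))
    (r₂ := fun (w : ∀ i, Zv i) (q : S) => r2 q.1 q.2 (w q.1.2.1))
    (s₁ := fun (y : ∀ i, Hv i) (q : S) => s1 q.1 q.2 (y q.1.1))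
    (s₂ := fun (y : ∀ i, Hv i) (q : S) => s2 q.1 q.2 (y q.1.2.1))
    x₀ (fun y y' => (hK y y').exists) (IsSimplyTransitive.pi fun q : S => hsimplye q.1.2.2)
    (fun w hw => ((hZeq w).mp fun p hp => congrFun hw ⟨p, hp⟩).imp fun _ hz => funext hz)
    (fun z x => funext fun i => hρequiv i z x)
    (fun w y => funext fun q => hs1equiv q.1 q.2 _ _)
    (fun w y => funext fun q => hs2equiv q.1 q.2 _ _)
    (funext fun q => hcomm x₀ q.1 q.2) (funext fun q => hβ q.1 q.2)
  exact ⟨x, congrFun hx, fun y hy => hinj ((funext hy).trans hx.symm)⟩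

/-- Patching for simply transitive actions (abstract form of Proposition `patching-coho`):
if the abelian coefficient groups form an equalizer diagram and the global `H²`-set is
nonempty, then the `H²`-sets form an equalizer diagram. -/
theorem patching_H2_of_patching_center {Iv Ie : Type} [Finite Iv] [Finite Ie]
    (S : Set (Iv × Iv × Ie))
    (Z : Type) [CommGroup Z] (Zv : Iv → Type) [∀ i, CommGroup (Zv i)]
    (Ze : Ie → Type) [∀ k, CommGroup (Ze k)]
    (φ : ∀ i, Z →* Zv i)
    (r1 : ∀ p : Iv × Iv × Ie, p ∈ S → (Zv p.1 →* Ze p.2.2))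
    (r2 : ∀ p : Iv × Iv × Ie, p ∈ S → (Zv p.2.1 →* Ze p.2.2))
    -- the groups form an equalizer diagram `Z → ∏ᵢ Zᵢ ⇉ ∏ₖ Zₖ`:
    (hZinj : Function.Injective fun z : Z => fun i => φ i z)
    (hZeq : ∀ f : ∀ i, Zv i,
      (∀ p (hp : p ∈ S), r1 p hp (f p.1) = r2 p hp (f p.2.1)) ↔ ∃ z : Z, ∀ i, φ i z = f i)
    -- the `H²`-sets with their simply transitive actions:
    (H : Type) (Hv : Iv → Type) (He : Ie → Type)
    (act : Z → H → H) (actv : ∀ i, Zv i → Hv i → Hv i) (acte : ∀ k, Ze k → He k → He k)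
    (hact1 : ∀ x, act 1 x = x) (hactmul : ∀ z z' x, act (z * z') x = act z (act z' x))
    (hactv1 : ∀ i x, actv i 1 x = x)
    (hactvmul : ∀ i z z' x, actv i (z * z') x = actv i z (actv i z' x))
    (hacte1 : ∀ k x, acte k 1 x = x)
    (hactemul : ∀ k z z' x, acte k (z * z') x = acte k z (acte k z' x))
    (hsimply : ∀ x y : H, ∃! z : Z, act z x = y)
    (hsimplyv : ∀ i (x y : Hv i), ∃! z : Zv i, actv i z x = y)
    (hsimplye : ∀ k (x y : He k), ∃! z : Ze k, acte k z x = y)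
    -- the equivariant restriction maps:
    (ρ : ∀ i, H → Hv i)
    (s1 : ∀ p : Iv × Iv × Ie, p ∈ S → (Hv p.1 → He p.2.2))
    (s2 : ∀ p : Iv × Iv × Ie, p ∈ S → (Hv p.2.1 → He p.2.2))
    (hρequiv : ∀ i z x, ρ i (act z x) = actv i (φ i z) (ρ i x))
    (hs1equiv : ∀ p (hp : p ∈ S) z x, s1 p hp (actv p.1 z x) = acte p.2.2 (r1 p hp z) (s1 p hp x))
    (hs2equiv : ∀ p (hp : p ∈ S) z x,
      s2 p hp (actv p.2.1 z x) = acte p.2.2 (r2 p hp z) (s2 p hp x))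
    (hcomm : ∀ (x : H) p (hp : p ∈ S), s1 p hp (ρ p.1 x) = s2 p hp (ρ p.2.1 x))
    -- nonemptiness of the global `H²`:
    (hne : Nonempty H) :
    -- conclusion: `H → ∏ᵢ Hᵢ ⇉ ∏ₖ Hₖ` is an equalizer diagram of sets
    Function.Injective (fun x : H => fun i => ρ i x) ∧
      ∀ β : ∀ i, Hv i, (∀ p (hp : p ∈ S), s1 p hp (β p.1) = s2 p hp (β p.2.1)) →
        ∃! x : H, ∀ i, ρ i x = β i :=
  patching_H2_of_patching_center_general S Z Zv Ze φ r1 r2 hZinj hZeq H Hv He act actv acte hact1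
    hactv1 hsimply hsimplyv hsimplye ρ s1 s2 hρequiv hs1equiv hs2equiv hcomm hne
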